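/- arXiv:2012.11965 — 2 statements merged into one kernel-verified Lean document; each statement's English description precedes it below -/
import Mathlib

section
/- Let H be an acyclic hypergraph and x a vertex contained in two distinct maximal hyperedges of H. Then x has two neighbors a and b that are not neighbors of each other (i.e., there is a chordless path a–x–b). -/
/-- Two vertices are neighbors in a hypergraph if some hyperedge contains both. -/
def Nbr {V : Type*} (E : Finset (Finset V)) (x y : V) : Prop :=
  ∃ e ∈ E, x ∈ e ∧ y ∈ e

/-- Join tree: a tree on the hyperedges with the running intersection property. -/
def IsJoinTreeOf {V ι : Type*} (T : SimpleGraph ι) (lab : ι → Finset V)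
    (E : Finset (Finset V)) : Prop :=
  T.IsTree ∧ (∀ i, lab i ∈ E) ∧ (∀ e ∈ E, ∃ i, lab i = e) ∧
    ∀ v : V, (T.induce {i | v ∈ lab i}).Preconnected

/-- A hypergraph is acyclic if it admits a join tree. -/
def HGAcyclic {V : Type*} (E : Finset (Finset V)) : Prop :=
  ∃ (ι : Type) (T : SimpleGraph ι) (lab : ι → Finset V), IsJoinTreeOf T lab E

/-- The maximal hyperedges of a hypergraph (w.r.t. strict containment). -/
def maximalEdges {V : Type*} [DecidableEq V] (E : Finset (Finset V)) :
    Finset (Finset V) :=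
  E.filter fun e => ∀ e' ∈ E, ¬ e ⊂ e'

/-! Take the join tree `T`, and nodes `i₁`, `i₂` labelled `e₁`, `e₂` at minimal distance. The
tree path `P` from `i₁` to `i₂` runs through hyperedges containing `x`. By maximality and minimality
the second node of `P` is labelled by a hyperedge missing some `a ∈ e₁`, and the penultimate node by
one missing some `b ∈ e₂`. If a hyperedge contained both `a` and `b`, the subtrees of `a` and `b`
would meet, and a subtree through `i₁` avoiding `P`'s second node and one through `i₂` avoiding its
penultimate node cannot meet in a tree. -/

open SimpleGraph Walk

namespace SimpleGraph

variable {V : Type*} {G : SimpleGraph V} {u v w : V}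

lemma exists_isPath_support_subset_of_induce_preconnected {S : Set V}
    (hS : (G.induce S).Preconnected) (hu : u ∈ S) (hv : v ∈ S) :
    ∃ p : G.Walk u v, p.IsPath ∧ ∀ w ∈ p.support, w ∈ S := by
  classical
  obtain ⟨q⟩ := hS ⟨u, hu⟩ ⟨v, hv⟩
  refine ⟨(q.map (Embedding.induce S).toHom).bypass, bypass_isPath _, fun w hw => ?_⟩
  obtain ⟨w', -, rfl⟩ := List.mem_map.mp
    (Walk.support_map (Embedding.induce S).toHom q ▸ support_bypass_subset_support _ hw)
  exact w'.2

lemma IsAcyclic.eq_of_isPath (hG : G.IsAcyclic) {p q : G.Walk u v} (hp : p.IsPath)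
    (hq : q.IsPath) : p = q :=
  Subtype.mk.inj <| hG.subsingleton_path u v |>.elim ⟨p, hp⟩ ⟨q, hq⟩

lemma IsAcyclic.support_subset_of_induce_preconnected (hG : G.IsAcyclic) {S : Set V}
    (hS : (G.induce S).Preconnected) (hu : u ∈ S) (hv : v ∈ S) {p : G.Walk u v}
    (hp : p.IsPath) : ∀ w ∈ p.support, w ∈ S := by
  obtain ⟨q, hq, hqS⟩ := exists_isPath_support_subset_of_induce_preconnected hS hu hv
  rwa [hG.eq_of_isPath hp hq]

lemma IsAcyclic.isPath_reverse_append (hG : G.IsAcyclic) {p : G.Walk u v} {q : G.Walk u w}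
    (hp : p.IsPath) (hq : q.IsPath) (hsnd : p.snd ∉ q.support) :
    (p.reverse.append q).IsPath := by
  classical
  rw [isPath_def, support_append, support_reverse, List.nodup_append]
  refine ⟨List.nodup_reverse.mpr hp.support_nodup, hq.support_nodup.tail, ?_⟩
  intro z hzp z' hzq hzz'
  subst hzz'
  have hzq' : z ∈ q.support := q.cons_tail_support ▸ List.mem_cons_of_mem u hzq
  have hzu : z ≠ u := by
    rintro rfl
    exact (List.nodup_cons.mp (q.cons_tail_support ▸ hq.support_nodup)).1 hzq
  have hzp' : z ∈ p.support := List.mem_reverse.mp hzp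
  -- the two paths from `u` to `z` coincide, so `q` passes through `p.snd`
  have htake := hG.eq_of_isPath (hp.takeUntil hzp') (hq.takeUntil hzq')
  apply hsnd
  rw [← snd_takeUntil hzu p hzp', htake]
  exact q.support_takeUntil_subset_support hzq' (getVert_mem_support _ 1)

lemma IsAcyclic.snd_mem_or_penultimate_mem (hG : G.IsAcyclic) {S S' : Set V}
    (hS : (G.induce S).Preconnected) (hS' : (G.induce S').Preconnected)
    (hSS' : (S ∩ S').Nonempty) {p : G.Walk u v} (hp : p.IsPath) (hu : u ∈ S) (hv : v ∈ S') :
    p.snd ∈ S ∨ p.penultimate ∈ S' := by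
  obtain ⟨k, hkS, hkS'⟩ := hSS'
  obtain ⟨q, hq, hqS⟩ := exists_isPath_support_subset_of_induce_preconnected hS hu hkS
  refine or_iff_not_imp_left.mpr fun hsnd => ?_
  -- if `q` avoids `p.snd`, the path from `v` to `k` runs back along all of `p`
  have hpq := hG.isPath_reverse_append hp hq fun h => hsnd (hqS _ h)
  refine hG.support_subset_of_induce_preconnected hS' hv hkS' hpq _ ?_
  rw [support_append, support_reverse]
  exact List.mem_append_left _ (List.mem_reverse.mpr (getVert_mem_support _ _))

lemma exists_mem_mem_forall_dist_le {A B : Set V} (hA : A.Nonempty) (hB : B.Nonempty) :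
    ∃ i ∈ A, ∃ j ∈ B, ∀ i' ∈ A, ∀ j' ∈ B, G.dist i j ≤ G.dist i' j' := by
  obtain ⟨⟨i, j⟩, ⟨hi, hj⟩, hmin⟩ := (InvImage.wf (fun p : V × V => G.dist p.1 p.2)
    wellFounded_lt).has_min (A ×ˢ B) (hA.prod hB)
  exact ⟨i, hi, j, hj, fun i' hi' j' hj' => not_lt.mp (hmin (i', j') ⟨hi', hj'⟩)⟩

end SimpleGraph

lemma not_subset_snd_of_dist_minimal {ι α : Type*} {T : SimpleGraph ι} {lab : ι → Finset α}
    {i k : ι} (hmax : ∀ j, ¬ lab i ⊂ lab j) (hmin : ∀ j, lab j = lab i → T.dist i k ≤ T.dist j k)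
    {p : T.Walk i k} (hp : p.length = T.dist i k) (hik : i ≠ k) : ¬ lab i ⊆ lab p.snd := by
  intro hsub
  have hdist := hmin p.snd ((hsub.eq_or_ssubset.resolve_right (hmax _)).symm)
  have htail := length_tail_add_one (not_nil_of_ne (p := p) hik)
  have := dist_le p.tail
  omega

/-- In an acyclic hypergraph, if a vertex `x` lies in two distinct
maximal hyperedges, then `x` has two neighbors `a`, `b` that are not neighbors of
each other (a chordless path `a–x–b`). -/
theorem chordless_path_through_vertex_of_two_maximal {V : Type*} [DecidableEq V]
    (E : Finset (Finset V)) (hacyc : HGAcyclic E)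
    (x : V) (e₁ e₂ : Finset V)
    (h1 : e₁ ∈ maximalEdges E) (h2 : e₂ ∈ maximalEdges E) (hne : e₁ ≠ e₂)
    (hx1 : x ∈ e₁) (hx2 : x ∈ e₂) :
    ∃ a b : V, a ≠ x ∧ b ≠ x ∧ Nbr E x a ∧ Nbr E x b ∧ ¬ Nbr E a b := by
  obtain ⟨ι, T, lab, hT, hlabE, hsurj, hconn⟩ := hacyc
  obtain ⟨h1E, hmax1⟩ := Finset.mem_filter.mp h1
  obtain ⟨h2E, hmax2⟩ := Finset.mem_filter.mp h2
  obtain ⟨i₁, rfl, i₂, rfl, hmin⟩ := T.exists_mem_mem_forall_dist_le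
    (A := {i | lab i = e₁}) (B := {j | lab j = e₂}) (hsurj e₁ h1E) (hsurj e₂ h2E)
  have hi : i₁ ≠ i₂ := fun h => hne (congrArg lab h)
  obtain ⟨P, hP, hPlen⟩ := hT.connected.exists_path_of_dist i₁ i₂
  have ha := not_subset_snd_of_dist_minimal (fun j => hmax1 _ (hlabE j))
    (fun j hj => hmin j hj i₂ rfl) hPlen hi
  have hb := not_subset_snd_of_dist_minimal (fun j => hmax2 _ (hlabE j))
    (fun j hj => by simpa only [SimpleGraph.dist_comm] using hmin i₁ rfl j hj)
    ((length_reverse P).trans (hPlen.trans SimpleGraph.dist_comm)) hi.symm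
  rw [snd_reverse] at hb
  obtain ⟨a, ha₁, ha⟩ := Finset.not_subset.mp ha
  obtain ⟨b, hb₂, hb⟩ := Finset.not_subset.mp hb
  have hxP := hT.isAcyclic.support_subset_of_induce_preconnected (hconn x) hx1 hx2 hP
  refine ⟨a, b, ?_, ?_, ⟨_, h1E, hx1, ha₁⟩, ⟨_, h2E, hx2, hb₂⟩, ?_⟩
  · rintro rfl; exact ha (hxP _ (getVert_mem_support _ _))
  · rintro rfl; exact hb (hxP _ (getVert_mem_support _ _))
  · rintro ⟨_, hg, hag, hbg⟩
    obtain ⟨k, rfl⟩ := hsurj _ hg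
    exact (hT.isAcyclic.snd_mem_or_penultimate_mem (hconn a) (hconn b) ⟨k, hag, hbg⟩ hP
      ha₁ hb₂).elim ha hb
end

section
/- The hypergraph of the maximal contraction of any full acyclic conjunctive query Q with α_free(Q) < 3 and mh(Q) > 2 contains a chordless path of four vertices. -/
/-- A chordless path of four (distinct) vertices: consecutive vertices are
neighbors, non-consecutive vertices are not. -/
def ChordlessPath4 {V : Type*} (E : Finset (Finset V)) (a b c d : V) : Prop :=
  a ≠ b ∧ a ≠ c ∧ a ≠ d ∧ b ≠ c ∧ b ≠ d ∧ c ≠ d ∧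
  Nbr E a b ∧ Nbr E b c ∧ Nbr E c d ∧
  ¬ Nbr E a c ∧ ¬ Nbr E a d ∧ ¬ Nbr E b d

/-- One contraction step of a full CQ (viewed as a hypergraph): remove an absorbed
atom (a hyperedge contained in another one), or remove an absorbed variable
(a variable `v` that appears in exactly the same hyperedges as another variable
`u`). -/
inductive ContractStep {V : Type*} [DecidableEq V] :
    Finset (Finset V) → Finset (Finset V) → Prop
  | atom (E : Finset (Finset V)) (e e' : Finset V) :
      e ∈ E → e' ∈ E → e ≠ e' → e ⊆ e' → ContractStep E (E.erase e)
  | var (E : Finset (Finset V)) (u v : V) :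
      u ≠ v → (∃ e ∈ E, v ∈ e) → (∀ e ∈ E, v ∈ e ↔ u ∈ e) →
      ContractStep E (E.image fun e => e.erase v)

/-!
A contraction step deletes an atom contained in another one, or deletes a variable that has a
twin; sending the deleted variable to its twin maps the primal graph of `E` into that of `Em`,
preserving adjacency and non-adjacency. So a chordless `P₄` of `E` survives in `Em`, and it
suffices to find one in `E`.

A join tree makes `E` conformal and its primal graph free of chordless 4-cycles (Helly property
of subtrees). If the primal graph had no chordless `P₄` either, take a non-universal vertex `u`
with largest closed neighbourhood: no non-universal neighbour of `u` is adjacent to a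
non-neighbour of `u`, and since `α_free < 3`, the vertices split into two cliques, `N[u]` and the
rest together with the universal vertices. Every atom lies in one of them, and by conformality all
maximal atoms inside one clique coincide, so `mh ≤ 2`.
-/

namespace SimpleGraph

variable {ι : Type*} {T : SimpleGraph ι}

def IsPathClosed (T : SimpleGraph ι) (S : Set ι) : Prop :=
  ∀ ⦃x y : ι⦄, x ∈ S → y ∈ S → ∀ p : T.Walk x y, p.IsPath → ∀ z ∈ p.support, z ∈ S

lemma IsAcyclic.support_subset_of_isPath (hT : T.IsAcyclic) {x y : ι} {p : T.Walk x y}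
    (hp : p.IsPath) (q : T.Walk x y) : p.support ⊆ q.support := by
  classical
  have : p = q.bypass :=
    congrArg Subtype.val ((hT.subsingleton_path x y).elim ⟨p, hp⟩ ⟨_, q.bypass_isPath⟩)
  exact this ▸ q.support_bypass_subset_support

lemma IsTree.isPathClosed_of_preconnected (hT : T.IsTree) {S : Set ι}
    (hS : (T.induce S).Preconnected) : T.IsPathClosed S := by
  intro x y hx hy p hp z hz
  obtain ⟨w⟩ := hS ⟨x, hx⟩ ⟨y, hy⟩
  have hz' : z ∈ (w.map (Embedding.induce S).toHom).support :=
    hT.isAcyclic.support_subset_of_isPath hp _ hz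
  rw [Walk.support_map, List.mem_map] at hz'
  obtain ⟨z', -, rfl⟩ := hz'
  exact z'.2

lemma IsPathClosed.inter {A B : Set ι} (hA : T.IsPathClosed A) (hB : T.IsPathClosed B) :
    T.IsPathClosed (A ∩ B) := fun _ _ hx hy p hp z hz =>
  ⟨hA hx.1 hy.1 p hp z hz, hB hx.2 hy.2 p hp z hz⟩

lemma IsTree.isPathClosed_union (hT : T.IsTree) {A B : Set ι} (hA : T.IsPathClosed A)
    (hB : T.IsPathClosed B) (hAB : (A ∩ B).Nonempty) : T.IsPathClosed (A ∪ B) := by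
  obtain ⟨w, hwA, hwB⟩ := hAB
  have cross : ∀ ⦃x y⦄, x ∈ A → y ∈ B → ∀ p : T.Walk x y, p.IsPath →
      ∀ z ∈ p.support, z ∈ A ∪ B := by
    intro x y hx hy p hp z hz
    obtain ⟨q₁, hq₁, -⟩ := hT.existsUnique_path x w
    obtain ⟨q₂, hq₂, -⟩ := hT.existsUnique_path w y
    have hz' := hT.isAcyclic.support_subset_of_isPath hp (q₁.append q₂) hz
    rcases (Walk.mem_support_append_iff _ _).mp hz' with h | h
    · exact Or.inl (hA hx hwA q₁ hq₁ z h)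
    · exact Or.inr (hB hwB hy q₂ hq₂ z h)
  rintro x y (hx | hx) (hy | hy) p hp z hz
  · exact Or.inl (hA hx hy p hp z hz)
  · exact cross hx hy p hp z hz
  · exact cross hy hx p.reverse hp.reverse z (by simpa using hz)
  · exact Or.inr (hB hx hy p hp z hz)

/-- Follow `p` until it first meets `C`, then continue inside `C` to `z`: the result `t` is a path
from `x` to `z` that meets `p` at a vertex `m ∈ C`. -/
lemma IsTree.exists_isPath_mem_support (hT : T.IsTree) {C : Set ι} (hC : T.IsPathClosed C)
    {z : ι} (hzC : z ∈ C) : ∀ {x y : ι} (p : T.Walk x y), p.IsPath → y ∈ C →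
      ∃ m ∈ p.support, m ∈ C ∧ ∃ t : T.Walk x z, t.IsPath ∧ m ∈ t.support ∧
        ∀ w ∈ t.support, w ∈ p.support ∨ w ∈ C := by
  have inside : ∀ {x y : ι} (p : T.Walk x y), x ∈ C → ∃ m ∈ p.support, m ∈ C ∧
      ∃ t : T.Walk x z, t.IsPath ∧ m ∈ t.support ∧ ∀ w ∈ t.support, w ∈ p.support ∨ w ∈ C := by
    intro x y p hxC
    obtain ⟨t, ht, -⟩ := hT.existsUnique_path x z
    exact ⟨x, p.start_mem_support, hxC, t, ht, t.start_mem_support,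
      fun w hw => Or.inr (hC hxC hzC t ht w hw)⟩
  intro x y p hp hyC
  induction p with
  | nil => exact inside _ hyC
  | @cons x x' y hadj q ih =>
    by_cases hxC : x ∈ C
    · exact inside _ hxC
    obtain ⟨hq, hxq⟩ := Walk.cons_isPath_iff hadj q |>.mp hp
    obtain ⟨m, hmq, hmC, t, ht, hmt, htq⟩ := ih hq hyC
    have hxt : x ∉ t.support := fun hx => (htq x hx).elim hxq hxC
    refine ⟨m, by simp [hmq], hmC, .cons hadj t, ht.cons hxt, by simp [hmt], fun w hw => ?_⟩
    rcases List.mem_cons.mp hw with rfl | hw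
    · exact Or.inl (Walk.start_mem_support _)
    · exact (htq w hw).imp_left fun h => by simp [h]

lemma IsTree.inter_inter_nonempty (hT : T.IsTree) {A B C : Set ι}
    (hA : T.IsPathClosed A) (hB : T.IsPathClosed B) (hC : T.IsPathClosed C)
    (hAB : (A ∩ B).Nonempty) (hBC : (B ∩ C).Nonempty) (hAC : (A ∩ C).Nonempty) :
    (A ∩ B ∩ C).Nonempty := by
  obtain ⟨x, hxA, hxB⟩ := hAB
  obtain ⟨y, hyB, hyC⟩ := hBC
  obtain ⟨z, hzA, hzC⟩ := hAC
  obtain ⟨p, hp, -⟩ := hT.existsUnique_path x y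
  obtain ⟨m, hmp, hmC, t, ht, hmt, -⟩ := hT.exists_isPath_mem_support hC hzC p hp hyC
  exact ⟨m, ⟨hA hxA hzA t ht m hmt, hB hxB hyB p hp m hmp⟩, hmC⟩

lemma IsTree.exists_mem_of_pairwise_inter_nonempty (hT : T.IsTree) {κ : Type*} {s : Finset κ}
    (hs : s.Nonempty) {S : κ → Set ι} (hS : ∀ k ∈ s, T.IsPathClosed (S k))
    (hint : ∀ k ∈ s, ∀ l ∈ s, (S k ∩ S l).Nonempty) : ∃ i, ∀ k ∈ s, i ∈ S k := by
  induction hs using Finset.Nonempty.cons_induction generalizing S with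
  | singleton a =>
    obtain ⟨i, hi, -⟩ := hint a (by simp) a (by simp)
    exact ⟨i, by simpa using hi⟩
  | cons a s _ hs ih =>
    have hSa := hS a (s.mem_cons_self a)
    have hS' k (hk : k ∈ s) := hS k (Finset.mem_cons_of_mem hk)
    have hint' k (hk : k ∈ s) := hint k (Finset.mem_cons_of_mem hk)
    obtain ⟨i, hi⟩ := ih (S := fun k => S k ∩ S a) (fun k hk => (hS' k hk).inter hSa)
      fun k hk l hl => by
        obtain ⟨m, ⟨hmk, hml⟩, hma⟩ := hT.inter_inter_nonempty (hS' k hk) (hS' l hl)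
          hSa (hint' k hk l (Finset.mem_cons_of_mem hl)) (hint' l hl a (s.mem_cons_self a))
          (hint' k hk a (s.mem_cons_self a))
        exact ⟨m, ⟨hmk, hma⟩, hml, hma⟩
    obtain ⟨k₀, hk₀⟩ := hs
    simp only [Finset.mem_cons, forall_eq_or_imp]
    exact ⟨i, (hi k₀ hk₀).2, fun k hk => (hi k hk).1⟩

end SimpleGraph

section Hypergraph

variable {V : Type*} {E : Finset (Finset V)}

lemma nbr_comm {x y : V} : Nbr E x y ↔ Nbr E y x := by
  simp only [Nbr, and_comm]

/-- `Nbr E x x` says that `x` is a vertex of `E`; it is used in this sense throughout. -/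
lemma Nbr.refl_left {x y : V} (h : Nbr E x y) : Nbr E x x :=
  let ⟨e, he, hx, _⟩ := h; ⟨e, he, hx, hx⟩

lemma Nbr.refl_right {x y : V} (h : Nbr E x y) : Nbr E y y :=
  let ⟨e, he, _, hy⟩ := h; ⟨e, he, hy, hy⟩

lemma nbr_congr {x x' y y' : V} (hx : ∀ e ∈ E, x' ∈ e ↔ x ∈ e) (hy : ∀ e ∈ E, y' ∈ e ↔ y ∈ e) :
    Nbr E x' y' ↔ Nbr E x y :=
  exists_congr fun e => and_congr_right fun he => and_congr (hx e he) (hy e he)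

def IsNbrClique (E : Finset (Finset V)) (s : Set V) : Prop :=
  ∀ x ∈ s, ∀ y ∈ s, Nbr E x y

def HGConformal (E : Finset (Finset V)) : Prop :=
  ∀ C : Finset V, C.Nonempty → IsNbrClique E C → ∃ e ∈ E, C ⊆ e

section JoinTree

variable {ι : Type*} {T : SimpleGraph ι} {lab : ι → Finset V}

lemma IsJoinTreeOf.nbr_iff (h : IsJoinTreeOf T lab E) {x y : V} :
    Nbr E x y ↔ ∃ i, x ∈ lab i ∧ y ∈ lab i := by
  constructor
  · rintro ⟨e, he, hx, hy⟩
    obtain ⟨i, rfl⟩ := h.2.2.1 e he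
    exact ⟨i, hx, hy⟩
  · rintro ⟨i, hx, hy⟩
    exact ⟨lab i, h.2.1 i, hx, hy⟩

lemma IsJoinTreeOf.isPathClosed (h : IsJoinTreeOf T lab E) (v : V) :
    T.IsPathClosed {i | v ∈ lab i} :=
  h.1.isPathClosed_of_preconnected (h.2.2.2 v)

end JoinTree

lemma HGAcyclic.hgConformal (h : HGAcyclic E) : HGConformal E := by
  obtain ⟨ι, T, lab, hJ⟩ := h
  intro C hC hclique
  obtain ⟨i, hi⟩ := hJ.1.exists_mem_of_pairwise_inter_nonempty hC (fun v _ => hJ.isPathClosed v)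
    fun x hx y hy => hJ.nbr_iff.mp (hclique x hx y hy)
  exact ⟨lab i, hJ.2.1 i, hi⟩

/-- The subtrees of `a` and `b` intersect, so their union is again a subtree; the Helly property
for it and the subtrees of `c` and `d` gives a node containing `c`, `d` and one of `a`, `b`. -/
lemma HGAcyclic.nbr_or_nbr_of_cycle4 (h : HGAcyclic E) {a b c d : V} (hab : Nbr E a b)
    (hbc : Nbr E b c) (hcd : Nbr E c d) (hda : Nbr E d a) : Nbr E a c ∨ Nbr E b d := by
  obtain ⟨ι, T, lab, hJ⟩ := h
  have hAB := hJ.1.isPathClosed_union (hJ.isPathClosed a) (hJ.isPathClosed b) (hJ.nbr_iff.mp hab)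
  obtain ⟨i, ⟨hia | hib, hic⟩, hid⟩ := hJ.1.inter_inter_nonempty hAB
    (hJ.isPathClosed c) (hJ.isPathClosed d)
    (let ⟨i, hb, hc⟩ := hJ.nbr_iff.mp hbc; ⟨i, Or.inr hb, hc⟩) (hJ.nbr_iff.mp hcd)
    (let ⟨i, hd, ha⟩ := hJ.nbr_iff.mp hda; ⟨i, Or.inl ha, hd⟩)
  · exact Or.inl (hJ.nbr_iff.mpr ⟨i, hia, hic⟩)
  · exact Or.inr (hJ.nbr_iff.mpr ⟨i, hib, hid⟩)

lemma chordlessPath4_of_nbr {a b c d : V} (hab : Nbr E a b) (hbc : Nbr E b c) (hcd : Nbr E c d)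
    (hac : ¬Nbr E a c) (had : ¬Nbr E a d) (hbd : ¬Nbr E b d) : ChordlessPath4 E a b c d := by
  refine ⟨?_, ?_, ?_, ?_, ?_, ?_, hab, hbc, hcd, hac, had, hbd⟩ <;> rintro rfl
  exacts [hac hbc, hac hab.refl_left, had hab.refl_left, hbd hcd, hbd hab.refl_right, hbd hbc]

lemma ChordlessPath4.map {E' : Finset (Finset V)} {f : V → V}
    (hf : ∀ x y, Nbr E' (f x) (f y) ↔ Nbr E x y) {a b c d : V} (h : ChordlessPath4 E a b c d) :
    ChordlessPath4 E' (f a) (f b) (f c) (f d) :=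
  let ⟨_, _, _, _, _, _, hab, hbc, hcd, hac, had, hbd⟩ := h
  chordlessPath4_of_nbr ((hf _ _).mpr hab) ((hf _ _).mpr hbc) ((hf _ _).mpr hcd)
    (mt (hf _ _).mp hac) (mt (hf _ _).mp had) (mt (hf _ _).mp hbd)

lemma nbr_of_forall_card_lt_three [DecidableEq V]
    (halpha : ∀ S : Finset V, (∀ v ∈ S, ∃ e ∈ E, v ∈ e) →
      (∀ a ∈ S, ∀ b ∈ S, a ≠ b → ¬Nbr E a b) → S.card < 3)
    {x y z : V} (hx : Nbr E x x) (hy : Nbr E y y) (hz : Nbr E z z) (hxy : ¬Nbr E x y)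
    (hxz : ¬Nbr E x z) : Nbr E y z := by
  by_contra hyz
  have hS := halpha {x, y, z}
    (by simp only [Finset.mem_insert, Finset.mem_singleton]
        rintro v (rfl | rfl | rfl) <;> simp_all [Nbr])
    (by simp only [Finset.mem_insert, Finset.mem_singleton]
        rintro a (rfl | rfl | rfl) b (rfl | rfl | rfl) hab <;> simp_all [nbr_comm])
  rw [Finset.card_eq_three.mpr ⟨x, y, z, ?_, ?_, ?_, rfl⟩] at hS
  · exact hS.false
  all_goals rintro rfl; contradiction

end Hypergraph

section Contraction

variable {V : Type*} [DecidableEq V] {E E' Em : Finset (Finset V)}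

lemma nbr_erase_iff {e e' : Finset V} (he' : e' ∈ E) (hne : e ≠ e') (hsub : e ⊆ e') {x y : V} :
    Nbr (E.erase e) x y ↔ Nbr E x y := by
  refine ⟨fun ⟨f, hf, hx, hy⟩ => ⟨f, Finset.mem_of_mem_erase hf, hx, hy⟩,
    fun ⟨f, hf, hx, hy⟩ => ?_⟩
  by_cases hfe : f = e
  · subst hfe
    exact ⟨e', Finset.mem_erase.mpr ⟨hne.symm, he'⟩, hsub hx, hsub hy⟩
  · exact ⟨f, Finset.mem_erase.mpr ⟨hfe, hf⟩, hx, hy⟩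

lemma nbr_image_erase_iff {v x y : V} :
    Nbr (E.image (·.erase v)) x y ↔ x ≠ v ∧ y ≠ v ∧ Nbr E x y := by
  simp only [Nbr, Finset.mem_image, exists_exists_and_eq_and, Finset.mem_erase]
  tauto

/-- An absorbed variable `v` can be replaced by its twin `u`, which survives the step. -/
lemma ContractStep.exists_nbr_iff (h : ContractStep E E') :
    ∃ f : V → V, ∀ x y, Nbr E' (f x) (f y) ↔ Nbr E x y := by
  cases h with
  | atom e e' _ he' hne hsub => exact ⟨id, fun x y => nbr_erase_iff he' hne hsub⟩
  | var u v huv _ htwin =>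
    have hfv : ∀ x, (if x = v then u else x) ≠ v := fun x => by split_ifs with h <;> simpa
    have hfmem : ∀ x, ∀ e ∈ E, (if x = v then u else x) ∈ e ↔ x ∈ e := fun x e he => by
      split_ifs with h
      · exact h ▸ (htwin e he).symm
      · exact Iff.rfl
    exact ⟨fun x => if x = v then u else x, fun x y => by
      rw [nbr_image_erase_iff, nbr_congr (hfmem x) (hfmem y)]
      exact ⟨fun h => h.2.2, fun h => ⟨hfv x, hfv y, h⟩⟩⟩

lemma exists_nbr_iff_of_reflTransGen (h : Relation.ReflTransGen ContractStep E Em) :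
    ∃ f : V → V, ∀ x y, Nbr Em (f x) (f y) ↔ Nbr E x y := by
  induction h with
  | refl => exact ⟨id, fun _ _ => Iff.rfl⟩
  | tail _ hstep ih =>
    obtain ⟨f, hf⟩ := ih
    obtain ⟨g, hg⟩ := hstep.exists_nbr_iff
    exact ⟨g ∘ f, fun x y => (hg _ _).trans (hf x y)⟩

end Contraction

section TwoCliques

variable {V : Type*} [DecidableEq V] {E : Finset (Finset V)}

def IsUniversal (E : Finset (Finset V)) (x : V) : Prop :=
  ∀ y, Nbr E y y → Nbr E x y

def closedNbhd (E : Finset (Finset V)) (x : V) : Finset V :=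
  (E.filter (x ∈ ·)).biUnion id

lemma mem_closedNbhd {x y : V} : y ∈ closedNbhd E x ↔ Nbr E x y := by
  simp [closedNbhd, Nbr, and_assoc]

/-- If `a ∈ N(u)` has a neighbour `b ∉ N[u]`, then a vertex `c ∈ N[u] \ N[a]` would close the
cycle `a u c b` (when `b ∼ c`) or the path `b a u c` (when not), both chordless. -/
lemma closedNbhd_ssubset_closedNbhd
    (hC4 : ∀ a b c d, Nbr E a b → Nbr E b c → Nbr E c d → Nbr E d a → Nbr E a c ∨ Nbr E b d)
    (hP4 : ∀ a b c d, ¬ChordlessPath4 E a b c d) {u a b : V} (hua : Nbr E u a)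
    (hab : Nbr E a b) (hub : ¬Nbr E u b) : closedNbhd E u ⊂ closedNbhd E a := by
  refine Finset.ssubset_iff_of_subset (fun c hc => ?_) |>.mpr ⟨b, mem_closedNbhd.mpr hab,
    mt mem_closedNbhd.mp hub⟩
  rw [mem_closedNbhd] at hc ⊢
  by_contra hac
  by_cases hbc : Nbr E b c
  · exact (hC4 a u c b (nbr_comm.mp hua) hc (nbr_comm.mp hbc) (nbr_comm.mp hab)).elim hac hub
  · exact hP4 b a u c (chordlessPath4_of_nbr (nbr_comm.mp hab) (nbr_comm.mp hua) hc
      (mt nbr_comm.mp hub) hbc hac)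

/-- With `u` a non-universal vertex of largest closed neighbourhood, the two cliques are `N[u]` and
the remaining vertices together with the universal ones. -/
theorem exists_isNbrClique_cover
    (hC4 : ∀ a b c d, Nbr E a b → Nbr E b c → Nbr E c d → Nbr E d a → Nbr E a c ∨ Nbr E b d)
    (h3 : ∀ x y z, Nbr E x x → Nbr E y y → Nbr E z z → ¬Nbr E x y → ¬Nbr E x z → Nbr E y z)
    (hP4 : ∀ a b c d, ¬ChordlessPath4 E a b c d) :
    ∃ A B : Set V, IsNbrClique E A ∧ IsNbrClique E B ∧
      ∀ e ∈ E, (e : Set V) ⊆ A ∨ (e : Set V) ⊆ B := by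
  classical
  by_cases huniv : ∀ x, Nbr E x x → IsUniversal E x
  · exact ⟨{x | Nbr E x x}, {x | Nbr E x x}, fun x hx y hy => huniv x hx y hy,
      fun x hx y hy => huniv x hx y hy, fun e he => Or.inl fun x hx => ⟨e, he, hx, hx⟩⟩
  push Not at huniv
  have hW : ∀ x, x ∈ E.biUnion id ↔ Nbr E x x := fun x => by simp [Nbr]
  obtain ⟨u, hu, hmax⟩ := ((E.biUnion id).filter fun x => ¬IsUniversal E x).exists_max_image
    (fun x => (closedNbhd E x).card)
    (let ⟨x, hx, hxu⟩ := huniv; ⟨x, Finset.mem_filter.mpr ⟨(hW x).mpr hx, hxu⟩⟩)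
  obtain ⟨huW, hu⟩ := Finset.mem_filter.mp hu
  have hcross : ∀ a b, Nbr E u a → ¬IsUniversal E a → ¬Nbr E u b → ¬Nbr E a b :=
    fun a b hua ha hub hab =>
      (hmax a (Finset.mem_filter.mpr ⟨(hW a).mpr hua.refl_right, ha⟩)).not_gt
        (Finset.card_lt_card (closedNbhd_ssubset_closedNbhd hC4 hP4 hua hab hub))
  obtain ⟨b, hb, hub⟩ : ∃ b, Nbr E b b ∧ ¬Nbr E u b := by simpa [IsUniversal] using hu
  refine ⟨{x | Nbr E u x}, {y | Nbr E y y ∧ (Nbr E u y → IsUniversal E y)}, ?_, ?_, ?_⟩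
  · intro x (hx : Nbr E u x) y (hy : Nbr E u y)
    by_cases hxu : IsUniversal E x
    · exact hxu y hy.refl_right
    by_cases hyu : IsUniversal E y
    · exact nbr_comm.mp (hyu x hx.refl_right)
    exact h3 b x y hb hx.refl_right hy.refl_right (mt nbr_comm.mp (hcross x b hx hxu hub))
      (mt nbr_comm.mp (hcross y b hy hyu hub))
  · rintro x ⟨hx, hxu⟩ y ⟨hy, hyu⟩
    by_cases hux : Nbr E u x
    · exact hxu hux y hy
    by_cases huy : Nbr E u y
    · exact nbr_comm.mp (hyu huy x hx)
    exact h3 u x y ((hW u).mp huW) hx hy hux huy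
  · intro e he
    by_cases h : ∃ x ∈ e, Nbr E u x ∧ ¬IsUniversal E x
    · obtain ⟨x, hxe, hux, hxu⟩ := h
      exact Or.inl fun y hy => by_contra fun huy => hcross x y hux hxu huy ⟨e, he, hxe, hy⟩
    · push Not at h
      exact Or.inr fun y hy => ⟨⟨e, he, hy, hy⟩, h y hy⟩

lemma eq_of_mem_maximalEdges_of_subset {e f : Finset V} (he : e ∈ maximalEdges E) (hf : f ∈ E)
    (hef : e ⊆ f) : e = f :=
  by_contra fun hne =>
    (Finset.mem_filter.mp he).2 f hf (Finset.ssubset_iff_subset_ne.mpr ⟨hef, hne⟩)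

/-- Both are contained in the edge that conformality provides for their union. -/
lemma eq_of_mem_maximalEdges_of_isNbrClique (hconf : HGConformal E) {A : Set V}
    (hA : IsNbrClique E A) {e f : Finset V} (he : e ∈ maximalEdges E) (hf : f ∈ maximalEdges E)
    (heA : (e : Set V) ⊆ A) (hfA : (f : Set V) ⊆ A) : e = f := by
  rcases (e ∪ f).eq_empty_or_nonempty with h | h
  · obtain ⟨rfl, rfl⟩ := Finset.union_eq_empty.mp h
    rfl
  have hefA : ((e ∪ f : Finset V) : Set V) ⊆ A := by
    rw [Finset.coe_union]
    exact Set.union_subset heA hfA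
  obtain ⟨g, hg, hefg⟩ := hconf (e ∪ f) h fun x hx y hy => hA x (hefA hx) y (hefA hy)
  rw [Finset.union_subset_iff] at hefg
  rw [eq_of_mem_maximalEdges_of_subset he hg hefg.1, eq_of_mem_maximalEdges_of_subset hf hg hefg.2]

lemma card_maximalEdges_le_two_of_cover (hconf : HGConformal E) {A B : Set V}
    (hA : IsNbrClique E A) (hB : IsNbrClique E B)
    (hcover : ∀ e ∈ E, (e : Set V) ⊆ A ∨ (e : Set V) ⊆ B) : (maximalEdges E).card ≤ 2 := by
  classical
  have hle : ∀ {S : Set V}, IsNbrClique E S →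
      ((maximalEdges E).filter fun e : Finset V => (e : Set V) ⊆ S).card ≤ 1 := fun hS =>
    Finset.card_le_one.mpr fun e he f hf => by
      rw [Finset.mem_filter] at he hf
      exact eq_of_mem_maximalEdges_of_isNbrClique hconf hS he.1 hf.1 he.2 hf.2
  have hsplit : maximalEdges E ⊆ ((maximalEdges E).filter fun e : Finset V => (e : Set V) ⊆ A) ∪
      (maximalEdges E).filter fun e : Finset V => (e : Set V) ⊆ B := fun e he => by
    rw [Finset.mem_union, Finset.mem_filter, Finset.mem_filter]
    exact (hcover e (Finset.mem_filter.mp he).1).imp (⟨he, ·⟩) (⟨he, ·⟩)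
  calc (maximalEdges E).card ≤ _ := Finset.card_le_card hsplit
    _ ≤ _ := Finset.card_union_le _ _
    _ ≤ 1 + 1 := add_le_add (hle hA) (hle hB)

end TwoCliques

theorem maximal_contraction_has_chordless_four_path_general {V : Type*} [DecidableEq V]
    (E Em : Finset (Finset V))
    (hacyc : HGAcyclic E)
    (halpha : ∀ S : Finset V, (∀ v ∈ S, ∃ e ∈ E, v ∈ e) →
        (∀ a ∈ S, ∀ b ∈ S, a ≠ b → ¬ Nbr E a b) → S.card < 3)
    (hmh : 2 < (maximalEdges E).card)
    (hreach : Relation.ReflTransGen ContractStep E Em) :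
    ∃ a b c d : V, ChordlessPath4 Em a b c d := by
  obtain ⟨f, hf⟩ := exists_nbr_iff_of_reflTransGen hreach
  suffices h : ∃ a b c d : V, ChordlessPath4 E a b c d by
    obtain ⟨a, b, c, d, h⟩ := h
    exact ⟨f a, f b, f c, f d, h.map hf⟩
  by_contra! hP4
  obtain ⟨A, B, hA, hB, hcover⟩ := exists_isNbrClique_cover
    (fun _ _ _ _ => hacyc.nbr_or_nbr_of_cycle4)
    (fun _ _ _ => nbr_of_forall_card_lt_three halpha) hP4
  exact hmh.not_ge (card_maximalEdges_le_two_of_cover hacyc.hgConformal hA hB hcover)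

/-- The hypergraph `Em` of a maximal contraction of any full
acyclic CQ `E` with `α_free(Q) < 3` and more than two maximal hyperedges contains
a chordless path of four vertices. -/
theorem maximal_contraction_has_chordless_four_path {V : Type*} [DecidableEq V]
    (E Em : Finset (Finset V))
    (hacyc : HGAcyclic E)
    (halpha : ∀ S : Finset V, (∀ v ∈ S, ∃ e ∈ E, v ∈ e) →
        (∀ a ∈ S, ∀ b ∈ S, a ≠ b → ¬ Nbr E a b) → S.card < 3)
    (hmh : 2 < (maximalEdges E).card)
    (hreach : Relation.ReflTransGen ContractStep E Em)
    (hmax : ∀ E', ¬ ContractStep Em E') :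
    ∃ a b c d : V, ChordlessPath4 Em a b c d :=
  maximal_contraction_has_chordless_four_path_general E Em hacyc halpha hmh hreach
end
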